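/- Let Σ = (o^{n_1} → o) × ⋯ × (o^{n_l} → o) and let g_i be the i-th generator term of type (Σ → o)^{n_i} → (Σ → o), defined by g_i(t_1,…,t_{n_i}) := λσ. σ.i (t_1 σ) ⋯ (t_{n_i} σ). Let ρ be a parametric family of type Σ → o (i.e. ρ_Q ∈ ⟦Σ → o⟧_Q for each finite set Q, and for every relation R ⊆ Q × Q′, (ρ_Q, ρ_{Q′}) ∈ ⟦Σ → o⟧_R). Then for every finite set Q, the fixed-point equation ρ_Q = ρ_{⟦Σ → o⟧_Q}(⟦g_1⟧_Q, …, ⟦g_l⟧_Q) holds as elements of ⟦Σ → o⟧_Q. -/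

import Mathlib

/-!
Fix `σ ∈ ⟦Σ⟧_Q` and relate `q ∈ Q` to `h ∈ ⟦Σ → o⟧_Q` when `h σ = q`. Since
`⟦g_i⟧_Q t̄` evaluates at `σ` to `σ.i (t̄ σ)`, the component `σ.i` is related to `⟦g_i⟧_Q`,
hence `σ` to `(⟦g_1⟧_Q, …, ⟦g_l⟧_Q)`; parametricity of `ρ` then gives
`ρ_{⟦Σ → o⟧_Q}(⟦g_1⟧_Q, …, ⟦g_l⟧_Q) σ = ρ_Q σ`.
-/

/-- Simple types over one base type `o`, with products and unit. -/
inductive Ty : Type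
  | o : Ty
  | arr : Ty → Ty → Ty
  | prod : Ty → Ty → Ty
  | unit : Ty

/-- Set-theoretic semantics of simple types, with base type interpreted as `Q`. -/
def sem (Q : Type) : Ty → Type
  | .o => Q
  | .arr A B => sem Q A → sem Q B
  | .prod A B => sem Q A × sem Q B
  | .unit => PUnit

/-- Typed de Bruijn variables. -/
inductive Var : List Ty → Ty → Type
  | vz {Γ A} : Var (A :: Γ) A
  | vs {Γ A B} : Var Γ A → Var (B :: Γ) A

/-- Intrinsically typed terms of the simply typed λ-calculus with products. -/
inductive Tm : List Ty → Ty → Type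
  | var {Γ A} : Var Γ A → Tm Γ A
  | lam {Γ A B} : Tm (A :: Γ) B → Tm Γ (.arr A B)
  | app {Γ A B} : Tm Γ (.arr A B) → Tm Γ A → Tm Γ B
  | pair {Γ A B} : Tm Γ A → Tm Γ B → Tm Γ (.prod A B)
  | fst {Γ A B} : Tm Γ (.prod A B) → Tm Γ A
  | snd {Γ A B} : Tm Γ (.prod A B) → Tm Γ B
  | star {Γ} : Tm Γ .unit

/-- Semantics of contexts. -/
def semCtx (Q : Type) : List Ty → Type
  | [] => PUnit
  | A :: Γ => sem Q A × semCtx Q Γ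

/-- Semantics of variables. -/
def evalVar (Q : Type) : {Γ : List Ty} → {A : Ty} → Var Γ A → semCtx Q Γ → sem Q A
  | _, _, .vz, ρ => ρ.1
  | _, _, .vs x, ρ => evalVar Q x ρ.2

/-- Semantics of terms. -/
def eval (Q : Type) : {Γ : List Ty} → {A : Ty} → Tm Γ A → semCtx Q Γ → sem Q A
  | _, _, .var x, ρ => evalVar Q x ρ
  | _, _, .lam M, ρ => fun a => eval Q M (a, ρ)
  | _, _, .app M N, ρ => eval Q M ρ (eval Q N ρ)
  | _, _, .pair M N, ρ => (eval Q M ρ, eval Q N ρ)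
  | _, _, .fst M, ρ => (eval Q M ρ).1
  | _, _, .snd M, ρ => (eval Q M ρ).2
  | _, _, .star, _ => PUnit.unit

/-- Semantics `⟦M⟧_Q` of a closed term `M`. -/
def ev0 (Q : Type) {A : Ty} (M : Tm [] A) : sem Q A := eval Q M PUnit.unit

/-- The logical relation `⟦A⟧_R` induced by a relation `R ⊆ Q × Q'`. -/
def rel {Q Q' : Type} (R : Q → Q' → Prop) : (A : Ty) → sem Q A → sem Q' A → Prop
  | .o, a, b => R a b
  | .arr A B, f, g => ∀ x y, rel R A x y → rel R B (f x) (g y)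
  | .prod A B, p, q => rel R A p.1 q.1 ∧ rel R B p.2 q.2
  | .unit, _, _ => True

/-- The type `o^n → o` (curried). -/
def onArr : ℕ → Ty
  | 0 => .o
  | n + 1 => .arr .o (onArr n)

/-- The type `Σ = (o^{n_1} → o) × ⋯ × (o^{n_l} → o)` of a ranked alphabet. -/
def SigTy : List ℕ → Ty
  | [] => .unit
  | n :: ns => .prod (onArr n) (SigTy ns)

/-- Currying: `((Fin n → Q) → Q) → ⟦o^n → o⟧_Q`. -/
def curryN (Q : Type) : (n : ℕ) → ((Fin n → Q) → Q) → sem Q (onArr n)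
  | 0, f => f Fin.elim0
  | n + 1, f => fun q => curryN Q n (fun g => f (Fin.cons q g))

/-- Uncurrying: `⟦o^n → o⟧_Q → (Fin n → Q) → Q`. -/
def uncurryN (Q : Type) : (n : ℕ) → sem Q (onArr n) → (Fin n → Q) → Q
  | 0, x, _ => x
  | n + 1, x, g => uncurryN Q n (x (g 0)) (fun j => g j.succ)

/-- The `i`-th projection `⟦Σ⟧_Q → ⟦o^{n_i} → o⟧_Q`. -/
def projSem (Q : Type) : (ns : List ℕ) → (i : Fin ns.length) →
    sem Q (SigTy ns) → sem Q (onArr (ns.get i))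
  | [], i, _ => i.elim0
  | _ :: _, ⟨0, _⟩, σ => σ.1
  | _ :: ns, ⟨i + 1, h⟩, σ =>
      projSem Q ns ⟨i, Nat.succ_lt_succ_iff.mp h⟩ σ.2

/-- Tupling a family of components into an element of `⟦Σ⟧_B`. -/
def tupleOf (B : Type) : (ns : List ℕ) →
    ((i : Fin ns.length) → sem B (onArr (ns.get i))) → sem B (SigTy ns)
  | [], _ => PUnit.unit
  | _ :: ns, G => (G ⟨0, Nat.succ_pos _⟩, tupleOf B ns (fun i => G i.succ))

/-- The semantics of the `i`-th generator term
`g_i(t_1,…,t_{n_i}) := λσ. σ.i (t_1 σ) ⋯ (t_{n_i} σ)` of type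
`(Σ → o)^{n_i} → (Σ → o)`, seen as an element of `⟦o^{n_i} → o⟧` over the base set
`⟦Σ → o⟧_Q`. -/
def gsem (Q : Type) (ns : List ℕ) (i : Fin ns.length) :
    sem (sem Q (.arr (SigTy ns) .o)) (onArr (ns.get i)) :=
  curryN _ (ns.get i) (fun ts => (fun σ =>
    uncurryN Q (ns.get i) (projSem Q ns i σ) (fun j => ts j σ) : sem Q (.arr (SigTy ns) .o)))

/-- The interpretation of any simple type at a finite set is finite. -/
instance semFinite (Q : Type) [Finite Q] : ∀ (A : Ty), Finite (sem Q A)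
  | .o => ‹Finite Q›
  | .arr A B => by
      haveI := semFinite Q A; haveI := semFinite Q B
      exact Pi.finite
  | .prod A B => by
      haveI := semFinite Q A; haveI := semFinite Q B
      exact Finite.instProd
  | .unit => inferInstanceAs (Finite PUnit.{1})

/-- The paper's `R_{f̄}`, with `a` in the role of `f̄`. -/
def evalRel {A B : Type} (a : A) (b : B) (h : A → B) : Prop := h a = b

lemma rel_onArr_curryN {Q Q' : Type} (R : Q → Q' → Prop) :
    ∀ (n : ℕ) (f : sem Q (onArr n)) (F : (Fin n → Q') → Q'),
      (∀ (xs : Fin n → Q) (ys : Fin n → Q'), (∀ j, R (xs j) (ys j)) →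
        R (uncurryN Q n f xs) (F ys)) →
      rel R (onArr n) f (curryN Q' n F)
  | 0, _, _, h => h Fin.elim0 Fin.elim0 fun j => j.elim0
  | n + 1, f, F, h => fun x y hxy =>
      rel_onArr_curryN R n (f x) (fun ys => F (Fin.cons y ys)) fun xs ys hxys =>
        h (Fin.cons x xs) (Fin.cons y ys) (Fin.cases hxy hxys)

lemma rel_SigTy_tupleOf {Q Q' : Type} (R : Q → Q' → Prop) :
    ∀ (ns : List ℕ) (τ : sem Q (SigTy ns))
      (G : (i : Fin ns.length) → sem Q' (onArr (ns.get i))),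
      (∀ i, rel R (onArr (ns.get i)) (projSem Q ns i τ) (G i)) →
      rel R (SigTy ns) τ (tupleOf Q' ns G)
  | [], _, _, _ => trivial
  | _ :: ns, τ, G, h =>
      ⟨h ⟨0, Nat.succ_pos _⟩, rel_SigTy_tupleOf R ns τ.2 (fun i => G i.succ) (fun i => h i.succ)⟩

lemma rel_projSem_gsem {Q : Type} (ns : List ℕ) (σ : sem Q (SigTy ns)) (i : Fin ns.length) :
    rel (evalRel σ) (onArr (ns.get i)) (projSem Q ns i σ) (gsem Q ns i) :=
  rel_onArr_curryN _ _ _ _ fun _ _ hxys =>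
    congrArg (uncurryN Q _ (projSem Q ns i σ)) (funext hxys)

lemma rel_tupleOf_gsem {Q : Type} (ns : List ℕ) (σ : sem Q (SigTy ns)) :
    rel (evalRel σ) (SigTy ns) σ (tupleOf _ ns (gsem Q ns)) :=
  rel_SigTy_tupleOf _ ns σ _ (rel_projSem_gsem ns σ)

theorem parametric_fixed_point (ns : List ℕ)
    (ρ : ∀ (Q : Type), Finite Q → sem Q (.arr (SigTy ns) .o))
    (hpar : ∀ (Q Q' : Type) (hQ : Finite Q) (hQ' : Finite Q') (R : Q → Q' → Prop),
      rel R (.arr (SigTy ns) .o) (ρ Q hQ) (ρ Q' hQ')) :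
    ∀ (Q : Type) (hQ : Finite Q),
      ρ Q hQ =
        ρ (sem Q (.arr (SigTy ns) .o)) (@semFinite Q hQ _)
          (tupleOf _ ns (fun i => gsem Q ns i)) := by
  intro Q hQ
  funext σ
  exact (hpar _ _ _ _ (evalRel σ) σ _ (rel_tupleOf_gsem ns σ)).symm
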